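/- Let G be a minimally nonperfectly divisible graph and v ∈ V(G). Then there exists a subset Y ⊆ N(v) with independence number α(G[Y]) ≥ 2 such that ω(G[N(v) \ Y]) = ω(G) − 1. -/

import Mathlib

open SimpleGraph

variable {V : Type}

/-- The clique number of the subgraph of `G` induced on `S`. -/
noncomputable def omegaOn (G : SimpleGraph V) (S : Set V) : ℕ :=
  sSup {n | ∃ s : Finset V, ↑s ⊆ S ∧ G.IsNClique n s}

/-- The subgraph of `G` induced on `S` is a perfect graph. -/
def IsPerfectOn (G : SimpleGraph V) (S : Set V) : Prop :=
  ∀ T : Set V, T ⊆ S → (G.induce T).chromaticNumber = (omegaOn G T : ℕ∞)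

/-- Every nonempty induced subgraph of `G[S]` admits a perfect division. -/
def PerfDivOn (G : SimpleGraph V) (S : Set V) : Prop :=
  ∀ H : Set V, H ⊆ S → H.Nonempty →
    ∃ A B : Set V, A ∪ B = H ∧ Disjoint A B ∧
      IsPerfectOn G A ∧ omegaOn G B < omegaOn G H

/-- `G` is minimally nonperfectly divisible. -/
def MNPD (G : SimpleGraph V) : Prop :=
  ¬ PerfDivOn G Set.univ ∧ ∀ S : Set V, S ≠ Set.univ → PerfDivOn G S

/-- The external neighbourhood `N(X)`. -/
def extNbhd (G : SimpleGraph V) (X : Set V) : Set V :=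
  {v | v ∉ X ∧ ∃ x ∈ X, G.Adj v x}

/-!
Delete `v` from an MNPD graph `G` with `ω(G) = c`: by minimality `G - v` has a perfect
division `(A, B)`, and `(A, B ∪ {v})` is not a perfect division of `G`, so `B ∪ {v}` contains
a `c`-clique; it must pass through `v`, hence `ω(N(v) ∩ B) ≥ c - 1`, while `ω(N(v)) ≤ c - 1`
always. Take `Y = N(v) ∩ A`. If `Y` were a clique, `A ∪ {v}` would still be perfect (colour `v`
with a colour missed by its clique neighbourhood), and `(A ∪ {v}, B)` would be a perfect
division of `G`.
-/

variable {G : SimpleGraph V}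

lemma omegaOn_empty (G : SimpleGraph V) : omegaOn G ∅ = 0 := by
  refine Nat.eq_zero_of_le_zero (csSup_le' ?_)
  rintro n ⟨s, hs, hcl⟩
  rw [← hcl.card_eq, Finset.coe_eq_empty.mp (Set.subset_empty_iff.mp hs)]
  rfl

lemma isPerfectOn_empty (G : SimpleGraph V) : IsPerfectOn G ∅ := by
  intro T hT
  obtain rfl := Set.subset_empty_iff.mp hT
  rw [chromaticNumber_eq_zero_of_isEmpty, omegaOn_empty]
  rfl

section Finite

variable [Finite V]

lemma omegaOn_bddAbove (G : SimpleGraph V) (S : Set V) :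
    BddAbove {n | ∃ s : Finset V, ↑s ⊆ S ∧ G.IsNClique n s} := by
  refine ⟨Nat.card V, ?_⟩
  rintro n ⟨s, -, hs⟩
  rw [← hs.card_eq, ← Nat.card_eq_finsetCard]
  exact Nat.card_le_card_of_injective _ Subtype.val_injective

lemma SimpleGraph.IsNClique.le_omegaOn {S : Set V} {n : ℕ} {s : Finset V}
    (hs : G.IsNClique n s) (hsS : ↑s ⊆ S) : n ≤ omegaOn G S :=
  le_csSup (omegaOn_bddAbove G S) ⟨s, hsS, hs⟩

lemma exists_isNClique_omegaOn (G : SimpleGraph V) (S : Set V) :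
    ∃ s : Finset V, (s : Set V) ⊆ S ∧ G.IsNClique (omegaOn G S) s :=
  Nat.sSup_mem (s := {n | ∃ s : Finset V, (s : Set V) ⊆ S ∧ G.IsNClique n s})
    ⟨0, ∅, by simp, by simp⟩ (omegaOn_bddAbove G S)

lemma omegaOn_mono {S T : Set V} (h : S ⊆ T) : omegaOn G S ≤ omegaOn G T := by
  obtain ⟨s, hsS, hs⟩ := exists_isNClique_omegaOn G S
  exact hs.le_omegaOn (hsS.trans h)

lemma one_le_omegaOn {S : Set V} {v : V} (hv : v ∈ S) : 1 ≤ omegaOn G S :=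
  (isNClique_singleton.mpr rfl).le_omegaOn (by simpa using hv)

lemma omegaOn_le_chromaticNumber (G : SimpleGraph V) (T : Set V) :
    (omegaOn G T : ℕ∞) ≤ (G.induce T).chromaticNumber := by
  obtain ⟨s, hsT, hs⟩ := exists_isNClique_omegaOn G T
  refine le_chromaticNumber_of_pairwise_adj (ι := s)
    (by rw [Nat.card_eq_finsetCard, hs.card_eq]) (fun x => ⟨x, hsT x.2⟩) ?_
  intro x y hxy
  exact hs.isClique x.2 y.2 (Subtype.coe_ne_coe.mpr hxy)

lemma omegaOn_add_one_le {S T : Set V} {v : V} (hS : S ⊆ G.neighborSet v)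
    (hT : insert v S ⊆ T) : omegaOn G S + 1 ≤ omegaOn G T := by
  classical
  obtain ⟨s, hsS, hs⟩ := exists_isNClique_omegaOn G S
  refine (hs.insert fun b hb => hS (hsS hb)).le_omegaOn ?_
  rw [Finset.coe_insert]
  exact (Set.insert_subset_insert hsS).trans hT

lemma omegaOn_insert_le (G : SimpleGraph V) (v : V) (B : Set V) :
    omegaOn G (insert v B) ≤ max (omegaOn G B) (omegaOn G (G.neighborSet v ∩ B) + 1) := by
  classical
  obtain ⟨s, hsB, hs⟩ := exists_isNClique_omegaOn G (insert v B)
  by_cases hv : v ∈ s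
  · have : omegaOn G (insert v B) - 1 ≤ omegaOn G (G.neighborSet v ∩ B) := by
      refine (hs.erase_of_mem hv).le_omegaOn fun x hx => ?_
      obtain ⟨hxv, hxs⟩ := Finset.mem_erase.mp hx
      exact ⟨hs.isClique hv hxs (Ne.symm hxv), (hsB hxs).resolve_left hxv⟩
    omega
  · refine le_max_of_le_left (hs.le_omegaOn fun x hx => (hsB hx).resolve_left ?_)
    rintro rfl
    exact hv hx

lemma SimpleGraph.Coloring.exists_color_ne_on_isClique {T S : Set V} {n : ℕ}
    (C : (G.induce T).Coloring (Fin n)) (hS : G.IsClique S) (hn : omegaOn G S < n) :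
    ∃ d : Fin n, ∀ w (hw : w ∈ T), w ∈ S → C ⟨w, hw⟩ ≠ d := by
  by_contra! h
  choose f hfT hfS hfC using h
  have hf : Function.Injective f := fun a b hab => by
    rw [← hfC a, ← hfC b]
    exact congrArg C (Subtype.ext hab)
  have hfS' : ↑(Finset.univ.map ⟨f, hf⟩) ⊆ S := by simpa [Set.subset_def] using hfS
  exact hn.not_ge (IsNClique.le_omegaOn ⟨hS.subset hfS', by simp⟩ hfS')

end Finite

lemma colorable_induce_of_diff_singleton {T : Set V} {v : V} {n : ℕ}
    (C : (G.induce (T \ {v})).Coloring (Fin n)) (d : Fin n)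
    (hd : ∀ w (hw : w ∈ T \ {v}), G.Adj v w → C ⟨w, hw⟩ ≠ d) :
    (G.induce T).Colorable n := by
  classical
  refine ⟨Coloring.mk (fun x => if h : x.1 = v then d else C ⟨x.1, x.2, h⟩) ?_⟩
  rintro ⟨a, ha⟩ ⟨b, hb⟩ (hab : G.Adj a b)
  by_cases hav : a = v <;> by_cases hbv : b = v <;> simp only [hav, hbv, dite_true, dite_false]
  · exact absurd (hav.trans hbv.symm) hab.ne
  · subst hav; exact (hd b ⟨hb, hbv⟩ hab).symm
  · subst hbv; exact hd a ⟨ha, hav⟩ hab.symm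
  · exact C.valid hab

lemma IsPerfectOn.insert [Finite V] {A : Set V} {v : V} (hA : IsPerfectOn G A)
    (hcl : G.IsClique (G.neighborSet v ∩ A)) : IsPerfectOn G (insert v A) := by
  intro T hT
  by_cases hvT : v ∈ T
  swap
  · exact hA T fun x hx => (hT hx).resolve_left (by rintro rfl; exact hvT hx)
  have hTA : T \ {v} ⊆ A := fun x hx => (hT hx.1).resolve_left hx.2
  obtain ⟨C⟩ : (G.induce (T \ {v})).Colorable (omegaOn G T) := by
    rw [← chromaticNumber_le_iff_colorable, hA _ hTA]
    exact_mod_cast omegaOn_mono Set.sdiff_subset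
  have hS : omegaOn G (G.neighborSet v ∩ (T \ {v})) < omegaOn G T :=
    omegaOn_add_one_le Set.inter_subset_left
      (Set.insert_subset hvT (Set.inter_subset_right.trans Set.sdiff_subset))
  obtain ⟨d, hd⟩ :=
    C.exists_color_ne_on_isClique (hcl.subset (Set.inter_subset_inter_right _ hTA)) hS
  refine le_antisymm ?_ (omegaOn_le_chromaticNumber G T)
  exact (colorable_induce_of_diff_singleton C d
    fun w hw hvw => hd w hw ⟨hvw, hw⟩).chromaticNumber_le

lemma MNPD.le_omegaOn_of_union_eq_univ (hG : MNPD G) {A B : Set V} (hAB : A ∪ B = Set.univ)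
    (hd : Disjoint A B) (hA : IsPerfectOn G A) : omegaOn G Set.univ ≤ omegaOn G B := by
  by_contra! hB
  refine hG.1 fun H _ hH => ?_
  by_cases hHu : H = Set.univ
  · subst hHu
    exact ⟨A, B, hAB, hd, hA, hB⟩
  · exact hG.2 H hHu H subset_rfl hH

lemma MNPD.exists_division_compl_singleton [Finite V] (hG : MNPD G) (v : V) :
    ∃ A B : Set V, A ∪ B = {v}ᶜ ∧ Disjoint A B ∧ IsPerfectOn G A ∧
      omegaOn G B < omegaOn G Set.univ := by
  rcases ({v}ᶜ : Set V).eq_empty_or_nonempty with h | h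
  · refine ⟨∅, ∅, by simp [h], by simp, isPerfectOn_empty G, ?_⟩
    rw [omegaOn_empty]
    exact one_le_omegaOn (Set.mem_univ v)
  · obtain ⟨A, B, hAB, hd, hA, hB⟩ :=
      hG.2 {v}ᶜ (Set.compl_ne_univ.mpr (Set.singleton_nonempty v)) {v}ᶜ subset_rfl h
    exact ⟨A, B, hAB, hd, hA, hB.trans_le (omegaOn_mono (Set.subset_univ _))⟩

theorem stmt_6 [Fintype V] (G : SimpleGraph V) (hG : MNPD G) (v : V) :
    ∃ Y : Set V, Y ⊆ G.neighborSet v ∧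
      (∃ a ∈ Y, ∃ b ∈ Y, a ≠ b ∧ ¬ G.Adj a b) ∧
      omegaOn G (G.neighborSet v \ Y) = omegaOn G Set.univ - 1 := by
  obtain ⟨A, B, hAB, hd, hA, hB⟩ := hG.exists_division_compl_singleton v
  have hvA : v ∉ A := Set.subset_compl_singleton_iff.mp (hAB ▸ Set.subset_union_left)
  have hvB : v ∉ B := Set.subset_compl_singleton_iff.mp (hAB ▸ Set.subset_union_right)
  have hBv : omegaOn G Set.univ ≤ omegaOn G (insert v B) :=
    hG.le_omegaOn_of_union_eq_univ
      (by rw [Set.union_insert, hAB, Set.insert_eq, Set.union_compl_self])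
      (Set.disjoint_insert_right.mpr ⟨hvA, hd⟩) hA
  have hNB : omegaOn G Set.univ ≤ omegaOn G (G.neighborSet v ∩ B) + 1 := by
    have := omegaOn_insert_le G v B
    omega
  have hN : omegaOn G (G.neighborSet v) + 1 ≤ omegaOn G Set.univ :=
    omegaOn_add_one_le subset_rfl (Set.subset_univ _)
  have hdiff : G.neighborSet v \ (G.neighborSet v ∩ A) = G.neighborSet v ∩ B := by
    ext x
    refine ⟨fun ⟨hx, hxA⟩ => ⟨hx, ?_⟩,
      fun ⟨hx, hxB⟩ => ⟨hx, fun h => hd.notMem_of_mem_left h.2 hxB⟩⟩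
    exact (hAB ▸ (G.ne_of_adj hx).symm : x ∈ A ∪ B).resolve_left fun h => hxA ⟨hx, h⟩
  refine ⟨G.neighborSet v ∩ A, Set.inter_subset_left, ?_, ?_⟩
  · by_contra! hcl
    have := hG.le_omegaOn_of_union_eq_univ
      (by rw [Set.insert_union, hAB, Set.insert_eq, Set.union_compl_self])
      (Set.disjoint_insert_left.mpr ⟨hvB, hd⟩) (hA.insert hcl)
    omega
  · rw [hdiff]
    have := omegaOn_mono (G := G) (Set.inter_subset_left : G.neighborSet v ∩ B ⊆ _)
    omega
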